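/- arXiv:2205.15922 — 3 statements merged into one kernel-verified Lean document; each statement's English description precedes it below -/
import Mathlib

section
/- On ℝ^6 with standard inner product, standard orthonormal basis e_1, …, e_6, and standard complex structure J₀ (J₀e₁ = e₂, J₀e₂ = −e₁, J₀e₃ = e₄, J₀e₄ = −e₃, J₀e₅ = e₆, J₀e₆ = −e₅), let ω₀ = e^{12} + e^{34} + e^{56}. If h is a symmetric bilinear form on ℝ^6 that is J₀-anti-invariant, i.e., h(J₀v, J₀w) = −h(v, w) for all v, w, then h_*ω₀ = 0. -/
noncomputable section

/-- The `i`-th standard basis vector of `ℝ^6`. -/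
def sb (i : Fin 6) : EuclideanSpace ℝ (Fin 6) := EuclideanSpace.single i (1 : ℝ)

/-- The basic alternating 2-form `e^i ∧ e^j` on `ℝ^6` (determinant convention). -/
def form2 (i j : Fin 6) : (Fin 2 → EuclideanSpace ℝ (Fin 6)) → ℝ :=
  fun v => v 0 i * v 1 j - v 0 j * v 1 i

/-- The basic alternating 3-form `e^i ∧ e^j ∧ e^k` on `ℝ^6` (determinant convention). -/
def form3 (i j k : Fin 6) : (Fin 3 → EuclideanSpace ℝ (Fin 6)) → ℝ :=
  fun v => Matrix.det !![v 0 i, v 0 j, v 0 k; v 1 i, v 1 j, v 1 k; v 2 i, v 2 j, v 2 k]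

/-- The standard 2-form `ω₀ = e^{12} + e^{34} + e^{56}` (indices shifted to `0,…,5`). -/
def omega0 : (Fin 2 → EuclideanSpace ℝ (Fin 6)) → ℝ :=
  fun v => form2 0 1 v + form2 2 3 v + form2 4 5 v

/-- `Re Ω₀ = e^{135} − e^{146} − e^{236} − e^{245}` (indices shifted to `0,…,5`). -/
def reOmega0 : (Fin 3 → EuclideanSpace ℝ (Fin 6)) → ℝ :=
  fun v => form3 0 2 4 v - form3 0 3 5 v - form3 1 2 5 v - form3 1 3 4 v

/-- The standard complex structure `J₀` on `ℝ^6`: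
`J₀e₁ = e₂, J₀e₂ = −e₁, J₀e₃ = e₄, J₀e₄ = −e₃, J₀e₅ = e₆, J₀e₆ = −e₅`. -/
def J0 : EuclideanSpace ℝ (Fin 6) → EuclideanSpace ℝ (Fin 6) := fun v =>
  EuclideanSpace.single 0 (-(v 1)) + EuclideanSpace.single 1 (v 0) +
    EuclideanSpace.single 2 (-(v 3)) + EuclideanSpace.single 3 (v 2) +
    EuclideanSpace.single 4 (-(v 5)) + EuclideanSpace.single 5 (v 4)

/-- The pointwise value of the wedge product `α ∧ κ` of a 1-form `α` with a `k`-form `κ`. -/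
def wedge1 {E : Type*} [AddCommGroup E] [Module ℝ E] {k : ℕ}
    (α : E → ℝ) (κ : (Fin k → E) → ℝ) : (Fin (k + 1) → E) → ℝ :=
  fun v => ∑ i : Fin (k + 1), (-1 : ℝ) ^ (i : ℕ) * α (v i) * κ (fun j => v (i.succAbove j))

/-- The interior product `ι_x κ`: insertion of `x` into the first argument. -/
def ins {E : Type*} [AddCommGroup E] [Module ℝ E] {k : ℕ}
    (x : E) (κ : (Fin (k + 1) → E) → ℝ) : (Fin k → E) → ℝ :=
  fun v => κ (Fin.cons x v)

/-- `h_*κ := -∑ j, h(e_j, ·) ∧ ι_{e_j} κ`, computed in the basis `e`. -/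
def hStar {E : Type*} [AddCommGroup E] [Module ℝ E] {n k : ℕ}
    (e : Fin n → E) (h : E → E → ℝ) (κ : (Fin (k + 1) → E) → ℝ) : (Fin (k + 1) → E) → ℝ :=
  fun v => -∑ j : Fin n, wedge1 (fun w => h (e j) w) (ins (e j) κ) v

/-- If `h` is a symmetric bilinear form on `ℝ^6` that is `J₀`-anti-invariant,
i.e. `h(J₀v, J₀w) = −h(v, w)`, then `h_*ω₀ = 0`. -/
theorem statement6
    (h : EuclideanSpace ℝ (Fin 6) →ₗ[ℝ] EuclideanSpace ℝ (Fin 6) →ₗ[ℝ] ℝ)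
    (hsymm : ∀ v w, h v w = h w v)
    (hanti : ∀ v w, h (J0 v) (J0 w) = -h v w) :
    hStar sb (fun a b => h a b) omega0 = 0 := by
  have hJJ : ∀ v : EuclideanSpace ℝ (Fin 6), J0 (J0 v) = -v := by
    intro v
    ext i
    fin_cases i <;>
      simp [J0, EuclideanSpace.single_apply, PiLp.add_apply, PiLp.neg_apply]
  have key : ∀ a b, h (J0 a) b = h a (J0 b) := by
    intro a b
    have h1 := hanti a (J0 b)
    rw [hJJ b] at h1
    rw [map_neg] at h1
    linarith [h1]
  have hsingle : ∀ (i : Fin 6) (c : ℝ) (a : EuclideanSpace ℝ (Fin 6)),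
      h (EuclideanSpace.single i c) a = c * h (sb i) a := by
    intro i c a
    have hs : (EuclideanSpace.single i c : EuclideanSpace ℝ (Fin 6)) = c • sb i := by
      ext k
      by_cases hk : k = i <;>
        simp [sb, EuclideanSpace.single_apply, hk]
    rw [hs, map_smul, LinearMap.smul_apply, smul_eq_mul]
  have hJexp : ∀ a b : EuclideanSpace ℝ (Fin 6), h (J0 a) b =
      -(a 1) * h (sb 0) b + a 0 * h (sb 1) b + -(a 3) * h (sb 2) b
        + a 2 * h (sb 3) b + -(a 5) * h (sb 4) b + a 4 * h (sb 5) b := by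
    intro a b
    simp only [J0, map_add, LinearMap.add_apply, hsingle]
  funext v
  have expand : hStar sb (fun a b => h a b) omega0 v =
      -( (h (sb 0) (v 0) * v 1 1 - h (sb 0) (v 1) * v 0 1)
       - (h (sb 1) (v 0) * v 1 0 - h (sb 1) (v 1) * v 0 0)
       + (h (sb 2) (v 0) * v 1 3 - h (sb 2) (v 1) * v 0 3)
       - (h (sb 3) (v 0) * v 1 2 - h (sb 3) (v 1) * v 0 2)
       + (h (sb 4) (v 0) * v 1 5 - h (sb 4) (v 1) * v 0 5)
       - (h (sb 5) (v 0) * v 1 4 - h (sb 5) (v 1) * v 0 4) ) := by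
    have e3 : Fin.succ (2 : Fin 5) = (3 : Fin 6) := by decide
    have e4 : Fin.succ (Fin.succ (2 : Fin 4)) = (4 : Fin 6) := by decide
    have e5 : Fin.succ (Fin.succ (Fin.succ (2 : Fin 3))) = (5 : Fin 6) := by decide
    simp only [hStar, wedge1, ins, omega0, form2, Fin.sum_univ_succ,
      Fin.sum_univ_zero, Fin.cons_zero, Fin.cons_succ, Fin.cons_one, sb]
    simp (config := { decide := true }) [Fin.succAbove, EuclideanSpace.single_apply, e3, e4, e5]
    ring
  have final : hStar sb (fun a b => h a b) omega0 v
      = h (J0 (v 1)) (v 0) - h (J0 (v 0)) (v 1) := by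
    rw [expand, hJexp (v 1) (v 0), hJexp (v 0) (v 1)]
    ring
  rw [final, key (v 1) (v 0), hsymm (v 1) (J0 (v 0)), sub_self, Pi.zero_apply]
end
end

section
/- On ℝ^6 with standard inner product, standard orthonormal basis e_1, …, e_6, and standard complex structure J₀ (J₀e₁ = e₂, J₀e₂ = −e₁, J₀e₃ = e₄, J₀e₄ = −e₃, J₀e₅ = e₆, J₀e₆ = −e₅), let Re Ω₀ = e^{135} − e^{146} − e^{236} − e^{245}, the real part of Ω₀ = (e^1 + ie^2) ∧ (e^3 + ie^4) ∧ (e^5 + ie^6). If h is a symmetric bilinear form on ℝ^6 that is J₀-invariant (h(J₀v, J₀w) = h(v, w) for all v, w) and trace-free (∑_i h(e_i, e_i) = 0), then h_*(Re Ω₀) = 0. -/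
noncomputable section

/- Auxiliary evaluation lemmas -/

lemma st7_cons0 {E : Type*} (a : E) (u : Fin 2 → E) : (Fin.cons a u : Fin 3 → E) 0 = a := rfl
lemma st7_cons1 {E : Type*} (a : E) (u : Fin 2 → E) : (Fin.cons a u : Fin 3 → E) 1 = u 0 := rfl
lemma st7_cons2 {E : Type*} (a : E) (u : Fin 2 → E) : (Fin.cons a u : Fin 3 → E) 2 = u 1 := rfl

lemma st7_sa00 : (0:Fin 3).succAbove 0 = 1 := rfl
lemma st7_sa01 : (0:Fin 3).succAbove 1 = 2 := rfl
lemma st7_sa10 : (1:Fin 3).succAbove 0 = 0 := rfl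
lemma st7_sa11 : (1:Fin 3).succAbove 1 = 2 := rfl
lemma st7_sa20 : (2:Fin 3).succAbove 0 = 0 := rfl
lemma st7_sa21 : (2:Fin 3).succAbove 1 = 1 := rfl

lemma st7_sum3 (f : Fin (2 + 1) → ℝ) : ∑ i, f i = f 0 + f 1 + f 2 :=
  Fin.sum_univ_three f

lemma st7_wdecomp (w : EuclideanSpace ℝ (Fin 6)) : w = ∑ k : Fin 6, w k • sb k := by
  ext i
  rw [Fin.sum_univ_six]
  fin_cases i <;>
    simp [sb, EuclideanSpace.single_apply, PiLp.add_apply, PiLp.smul_apply]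

lemma st7_J0sb0 : J0 (sb 0) = sb 1 := by
  ext i; fin_cases i <;> simp [J0, sb, EuclideanSpace.single_apply]
lemma st7_J0sb1 : J0 (sb 1) = -sb 0 := by
  ext i; fin_cases i <;> simp [J0, sb, EuclideanSpace.single_apply]
lemma st7_J0sb2 : J0 (sb 2) = sb 3 := by
  ext i; fin_cases i <;> simp [J0, sb, EuclideanSpace.single_apply]
lemma st7_J0sb3 : J0 (sb 3) = -sb 2 := by
  ext i; fin_cases i <;> simp [J0, sb, EuclideanSpace.single_apply]
lemma st7_J0sb4 : J0 (sb 4) = sb 5 := by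
  ext i; fin_cases i <;> simp [J0, sb, EuclideanSpace.single_apply]
lemma st7_J0sb5 : J0 (sb 5) = -sb 4 := by
  ext i; fin_cases i <;> simp [J0, sb, EuclideanSpace.single_apply]

set_option maxHeartbeats 16000000 in
/-- If `h` is a symmetric bilinear form on `ℝ^6` that is `J₀`-invariant
(`h(J₀v, J₀w) = h(v, w)`) and trace-free, then `h_*(Re Ω₀) = 0`. -/
theorem statement7
    (h : EuclideanSpace ℝ (Fin 6) →ₗ[ℝ] EuclideanSpace ℝ (Fin 6) →ₗ[ℝ] ℝ)
    (hsymm : ∀ v w, h v w = h w v)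
    (hinv : ∀ v w, h (J0 v) (J0 w) = h v w)
    (htrace : ∑ i : Fin 6, h (sb i) (sb i) = 0) :
    hStar sb (fun a b => h a b) reOmega0 = 0 := by
  obtain ⟨H, hH⟩ : ∃ H : Fin 6 → Fin 6 → ℝ, ∀ j k, H j k = h (sb j) (sb k) :=
    ⟨_, fun _ _ => rfl⟩
  have hdec : ∀ (j : Fin 6) (w : EuclideanSpace ℝ (Fin 6)), h (sb j) w =
      w 0 * H j 0 + w 1 * H j 1 + w 2 * H j 2 + w 3 * H j 3 + w 4 * H j 4 + w 5 * H j 5 := by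
    intro j w
    conv_lhs => rw [st7_wdecomp w]
    rw [map_sum, Fin.sum_univ_six]
    simp [smul_eq_mul, hH]
  -- invariance relations
  have rinv : ∀ i j : Fin 6, h (J0 (sb i)) (J0 (sb j)) = h (sb i) (sb j) := fun i j => hinv _ _
  have e11 : H 1 1 = H 0 0 := by
    have t := rinv 0 0; rw [st7_J0sb0] at t; simp only [hH]; exact t
  have e33 : H 3 3 = H 2 2 := by
    have t := rinv 2 2; rw [st7_J0sb2] at t; simp only [hH]; exact t
  have e55 : H 5 5 = H 4 4 := by
    have t := rinv 4 4; rw [st7_J0sb4] at t; simp only [hH]; exact t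
  have e01 : H 0 1 = 0 := by
    have t := rinv 0 1; rw [st7_J0sb0, st7_J0sb1] at t
    simp only [map_neg, LinearMap.neg_apply] at t
    have s := hsymm (sb 1) (sb 0)
    simp only [hH]; linarith [t, s]
  have e23 : H 2 3 = 0 := by
    have t := rinv 2 3; rw [st7_J0sb2, st7_J0sb3] at t
    simp only [map_neg, LinearMap.neg_apply] at t
    have s := hsymm (sb 3) (sb 2)
    simp only [hH]; linarith [t, s]
  have e45 : H 4 5 = 0 := by
    have t := rinv 4 5; rw [st7_J0sb4, st7_J0sb5] at t
    simp only [map_neg, LinearMap.neg_apply] at t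
    have s := hsymm (sb 5) (sb 4)
    simp only [hH]; linarith [t, s]
  have e13 : H 1 3 = H 0 2 := by
    have t := rinv 0 2; rw [st7_J0sb0, st7_J0sb2] at t; simp only [hH]; exact t
  have e12 : H 1 2 = -H 0 3 := by
    have t := rinv 0 3; rw [st7_J0sb0, st7_J0sb3] at t
    simp only [map_neg, LinearMap.neg_apply] at t
    simp only [hH]; linarith [t]
  have e15 : H 1 5 = H 0 4 := by
    have t := rinv 0 4; rw [st7_J0sb0, st7_J0sb4] at t; simp only [hH]; exact t
  have e14 : H 1 4 = -H 0 5 := by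
    have t := rinv 0 5; rw [st7_J0sb0, st7_J0sb5] at t
    simp only [map_neg, LinearMap.neg_apply] at t
    simp only [hH]; linarith [t]
  have e35 : H 3 5 = H 2 4 := by
    have t := rinv 2 4; rw [st7_J0sb2, st7_J0sb4] at t; simp only [hH]; exact t
  have e34 : H 3 4 = -H 2 5 := by
    have t := rinv 2 5; rw [st7_J0sb2, st7_J0sb5] at t
    simp only [map_neg, LinearMap.neg_apply] at t
    simp only [hH]; linarith [t]
  -- symmetry relations
  have s10 : H 1 0 = H 0 1 := by simp only [hH]; exact hsymm _ _
  have s20 : H 2 0 = H 0 2 := by simp only [hH]; exact hsymm _ _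
  have s21 : H 2 1 = H 1 2 := by simp only [hH]; exact hsymm _ _
  have s30 : H 3 0 = H 0 3 := by simp only [hH]; exact hsymm _ _
  have s31 : H 3 1 = H 1 3 := by simp only [hH]; exact hsymm _ _
  have s32 : H 3 2 = H 2 3 := by simp only [hH]; exact hsymm _ _
  have s40 : H 4 0 = H 0 4 := by simp only [hH]; exact hsymm _ _
  have s41 : H 4 1 = H 1 4 := by simp only [hH]; exact hsymm _ _
  have s42 : H 4 2 = H 2 4 := by simp only [hH]; exact hsymm _ _
  have s43 : H 4 3 = H 3 4 := by simp only [hH]; exact hsymm _ _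
  have s50 : H 5 0 = H 0 5 := by simp only [hH]; exact hsymm _ _
  have s51 : H 5 1 = H 1 5 := by simp only [hH]; exact hsymm _ _
  have s52 : H 5 2 = H 2 5 := by simp only [hH]; exact hsymm _ _
  have s53 : H 5 3 = H 3 5 := by simp only [hH]; exact hsymm _ _
  have s54 : H 5 4 = H 4 5 := by simp only [hH]; exact hsymm _ _
  -- trace relation
  have e44 : H 4 4 = -H 0 0 - H 2 2 := by
    rw [Fin.sum_univ_six] at htrace
    simp only [hH] at e11 e33 e55 ⊢
    linarith [htrace, e11, e33, e55]
  funext v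
  simp only [hStar, wedge1, ins, reOmega0, form3, Matrix.det_fin_three,
    Fin.sum_univ_six, Fin.sum_univ_three, st7_sum3, Matrix.cons_val', Matrix.cons_val_zero,
    Matrix.cons_val_one, Matrix.head_cons, Matrix.head_fin_const, Matrix.empty_val',
    Matrix.cons_val_fin_one, st7_cons0, st7_cons1, st7_cons2,
    st7_sa00, st7_sa01, st7_sa10, st7_sa11, st7_sa20, st7_sa21]
  simp only [hdec]
  simp only [sb, EuclideanSpace.single_apply]
  simp only [Fin.isValue, Fin.reduceEq, if_true, if_false, ite_true, ite_false]
  simp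
  simp only [s10, s20, s21, s30, s31, s32, s40, s41, s42, s43, s50, s51, s52, s53, s54,
    e01, e23, e45, e11, e33, e55, e13, e12, e15, e14, e35, e34, e44]
  ring
end
end

section
/- On ℝ^6 with standard inner product and standard orthonormal basis e_1, …, e_6, let ω₀ = e^{12} + e^{34} + e^{56} and Re Ω₀ = e^{135} − e^{146} − e^{236} − e^{245}. If h is a symmetric bilinear form on ℝ^6 with ∑_{i=1}^6 h(e_i, e_i) = 0, h_*ω₀ = 0, and h_*(Re Ω₀) = 0, then h = 0. -/
noncomputable section

/-!
Since `ω₀(x, y) = ⟨J₀x, y⟩`, one has `h_*ω₀(x, y) = h(J₀y, x) − h(J₀x, y)`, so for symmetric `h`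
the first condition says `h(J₀x, y) = h(x, J₀y)`: `h` anticommutes with `J₀`. For such `h` the
component of `h_*Re Ω₀` on a triple `e_a, J₀e_a, e_c` with `e_c` in another complex line is twice
a single entry of `h`, and the components on `e₀e₂e₄, e₀e₃e₅, e₁e₂e₅` (resp. `e₀e₂e₅, e₀e₃e₄,
e₁e₂e₄`; indices from 0) form an invertible `3 × 3` system for the diagonal entries (resp. the
entries `h(e_a, J₀e_a)`).
-/

section Contraction

variable {E : Type*} [AddCommGroup E] [Module ℝ E] {n : ℕ}

theorem hStar_apply_two (e : Fin n → E) (h : E → E → ℝ) (κ : (Fin 2 → E) → ℝ) (x y : E) :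
    hStar e h κ ![x, y] = -∑ j, (h (e j) x * κ ![e j, y] - h (e j) y * κ ![e j, x]) := by
  have cons_eq : ∀ (i : Fin 2) (w : E),
      (Fin.cons w fun l => ![x, y] (i.succAbove l) : Fin 2 → E) = ![w, ![y, x] i] := by
    intro i w; funext l; fin_cases i <;> fin_cases l <;> rfl
  simp only [hStar, wedge1, ins, cons_eq]
  simp [sub_eq_add_neg]

theorem hStar_apply_three (e : Fin n → E) (h : E → E → ℝ) (κ : (Fin 3 → E) → ℝ) (x y z : E) :
    hStar e h κ ![x, y, z] = -∑ j, (h (e j) x * κ ![e j, y, z] - h (e j) y * κ ![e j, x, z]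
      + h (e j) z * κ ![e j, x, y]) := by
  have cons_eq : ∀ (i : Fin 3) (w : E), (Fin.cons w fun l => ![x, y, z] (i.succAbove l) : Fin 3 → E)
      = ![w, ![y, x, x] i, ![z, z, y] i] := by
    intro i w; funext l; fin_cases i <;> fin_cases l <;> rfl
  simp only [hStar, wedge1, ins, cons_eq]
  simp [Fin.sum_univ_three, sub_eq_add_neg]

end Contraction

local notation "ℝ⁶" => EuclideanSpace ℝ (Fin 6)

theorem sb_apply (i j : Fin 6) : sb i j = if j = i then 1 else 0 := by
  simp [sb]

theorem single_eq_smul_sb (i : Fin 6) (a : ℝ) : EuclideanSpace.single i a = a • sb i := by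
  ext j; simp [sb_apply]

theorem J0_eq (x : ℝ⁶) :
    J0 x = -x 1 • sb 0 + x 0 • sb 1 + -x 3 • sb 2 + x 2 • sb 3 + -x 5 • sb 4 + x 4 • sb 5 := by
  simp only [J0, single_eq_smul_sb]

theorem J0_sb (i : Fin 6) : J0 (sb i) = ![sb 1, -sb 0, sb 3, -sb 2, sb 5, -sb 4] i := by
  fin_cases i <;> simp [J0_eq, sb_apply]

theorem ext_sb {h : ℝ⁶ →ₗ[ℝ] ℝ⁶ →ₗ[ℝ] ℝ} (H : ∀ i j, h (sb i) (sb j) = 0) : h = 0 :=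
  LinearMap.ext_basis (EuclideanSpace.basisFun (Fin 6) ℝ).toBasis
    (EuclideanSpace.basisFun (Fin 6) ℝ).toBasis fun i j => by simpa [sb] using H i j

section BilinearForm

variable (h : ℝ⁶ →ₗ[ℝ] ℝ⁶ →ₗ[ℝ] ℝ)

theorem hStar_omega0_apply (x y : ℝ⁶) :
    hStar sb (fun a b => h a b) omega0 ![x, y] = h (J0 y) x - h (J0 x) y := by
  rw [hStar_apply_two]
  simp [omega0, form2, J0_eq, sb_apply, Fin.sum_univ_six]
  ring

theorem apply_J0_comm_of_hStar_omega0_eq_zero (hsymm : ∀ v w, h v w = h w v)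
    (hω : hStar sb (fun a b => h a b) omega0 = 0) (x y : ℝ⁶) : h (J0 x) y = h x (J0 y) := by
  have := congrFun hω ![y, x]
  rw [hStar_omega0_apply, Pi.zero_apply] at this
  rw [hsymm x]
  linarith

theorem eq_zero_of_apply_J0_comm_of_hStar_reOmega0_eq_zero (hsymm : ∀ v w, h v w = h w v)
    (hJ : ∀ x y, h (J0 x) y = h x (J0 y)) (hΩ : hStar sb (fun a b => h a b) reOmega0 = 0) :
    h = 0 := by
  have R (a b c : Fin 6) : ∑ l, (h (sb l) (sb a) * reOmega0 ![sb l, sb b, sb c]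
      - h (sb l) (sb b) * reOmega0 ![sb l, sb a, sb c]
      + h (sb l) (sb c) * reOmega0 ![sb l, sb a, sb b]) = 0 := by
    simpa [hStar_apply_three] using congrFun hΩ ![sb a, sb b, sb c]
  have r012 := R 0 1 2; have r013 := R 0 1 3; have r014 := R 0 1 4; have r015 := R 0 1 5
  have r023 := R 0 2 3; have r123 := R 1 2 3
  have r024 := R 0 2 4; have r035 := R 0 3 5; have r125 := R 1 2 5
  have r025 := R 0 2 5; have r034 := R 0 3 4; have r124 := R 1 2 4
  simp [reOmega0, form3, Matrix.det_fin_three,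
    Fin.sum_univ_six, sb_apply] at r012 r013 r014 r015 r023 r123 r024 r035 r125 r025 r034 r124
  have j01 := hJ (sb 0) (sb 1); have j23 := hJ (sb 2) (sb 3); have j45 := hJ (sb 4) (sb 5)
  have j02 := hJ (sb 0) (sb 2); have j03 := hJ (sb 0) (sb 3); have j04 := hJ (sb 0) (sb 4)
  have j05 := hJ (sb 0) (sb 5); have j24 := hJ (sb 2) (sb 4); have j25 := hJ (sb 2) (sb 5)
  simp [J0_sb] at j01 j23 j45 j02 j03 j04 j05 j24 j25
  -- write every entry as `h (sb i) (sb j)` with `i ≤ j`, one `linarith` atom per entry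
  have swap (i j : Fin 6) (_ : j < i) : h (sb i) (sb j) = h (sb j) (sb i) := hsymm _ _
  simp (disch := decide) only [swap] at *
  refine ext_sb fun i j => ?_
  fin_cases i <;> fin_cases j <;>
    simp (disch := decide) only [Fin.reduceFinMk, swap] <;> linarith

end BilinearForm

theorem statement10_general
    (h : EuclideanSpace ℝ (Fin 6) →ₗ[ℝ] EuclideanSpace ℝ (Fin 6) →ₗ[ℝ] ℝ)
    (hsymm : ∀ v w, h v w = h w v)
    (hvan2 : hStar sb (fun a b => h a b) omega0 = 0)
    (hvan3 : hStar sb (fun a b => h a b) reOmega0 = 0) :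
    h = 0 :=
  eq_zero_of_apply_J0_comm_of_hStar_reOmega0_eq_zero h hsymm
    (apply_J0_comm_of_hStar_omega0_eq_zero h hsymm hvan2) hvan3

/-- If `h` is a symmetric bilinear form on `ℝ^6` with vanishing trace,
`h_*ω₀ = 0` and `h_*(Re Ω₀) = 0`, then `h = 0`. -/
theorem statement10
    (h : EuclideanSpace ℝ (Fin 6) →ₗ[ℝ] EuclideanSpace ℝ (Fin 6) →ₗ[ℝ] ℝ)
    (hsymm : ∀ v w, h v w = h w v)
    (htrace : ∑ i : Fin 6, h (sb i) (sb i) = 0)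
    (hvan2 : hStar sb (fun a b => h a b) omega0 = 0)
    (hvan3 : hStar sb (fun a b => h a b) reOmega0 = 0) :
    h = 0 :=
  statement10_general h hsymm hvan2 hvan3
end
end
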